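/- arXiv:1707.05027 — 4 statements merged into one kernel-verified Lean document; each statement's English description precedes it below -/
import Mathlib

section
/- Let n ≥ 1 and let 𝔻 ⊂ ℝⁿ be the open unit ball. There is no pair of continuous functions r : 𝔻 → (0,1] and R : ((0,1] × 𝔻) × 𝔻 → (0,1] such that r₁ · R((r₁,c₁),P) = r(r₁·P + c₁) for all r₁ ∈ (0,1], c₁ ∈ 𝔻, P ∈ 𝔻 with r₁·P + c₁ ∈ 𝔻 (i.e. for all data where the affine map x ↦ r₁x + c₁ sends 𝔻 into 𝔻). -/
open Metric Set

/- With `c₁ = P = 0` the identity reads `r 0 = r₁ * R ((r₁, 0), 0) ≤ r₁` for every `r₁ ∈ (0,1]`,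
since every homothety `x ↦ r₁ • x` maps `𝔻` into itself; taking `r₁ = r 0 / 2` contradicts
`r 0 > 0`. -/

theorem stmt3_general (n : ℕ) :
    ¬ ∃ (r : EuclideanSpace ℝ (Fin n) → ℝ)
        (R : (ℝ × EuclideanSpace ℝ (Fin n)) × EuclideanSpace ℝ (Fin n) → ℝ),
      ContinuousOn r (ball (0 : EuclideanSpace ℝ (Fin n)) 1) ∧
      (∀ P ∈ ball (0 : EuclideanSpace ℝ (Fin n)) 1, r P ∈ Ioc (0 : ℝ) 1) ∧
      ContinuousOn R {p : (ℝ × EuclideanSpace ℝ (Fin n)) × EuclideanSpace ℝ (Fin n) |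
        p.1.1 ∈ Ioc (0 : ℝ) 1 ∧ p.1.2 ∈ ball (0 : EuclideanSpace ℝ (Fin n)) 1 ∧
        p.2 ∈ ball (0 : EuclideanSpace ℝ (Fin n)) 1} ∧
      (∀ p : (ℝ × EuclideanSpace ℝ (Fin n)) × EuclideanSpace ℝ (Fin n),
        p.1.1 ∈ Ioc (0 : ℝ) 1 → p.1.2 ∈ ball (0 : EuclideanSpace ℝ (Fin n)) 1 →
        p.2 ∈ ball (0 : EuclideanSpace ℝ (Fin n)) 1 → R p ∈ Ioc (0 : ℝ) 1) ∧
      (∀ (r₁ : ℝ) (c₁ P : EuclideanSpace ℝ (Fin n)),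
        r₁ ∈ Ioc (0 : ℝ) 1 → c₁ ∈ ball (0 : EuclideanSpace ℝ (Fin n)) 1 →
        P ∈ ball (0 : EuclideanSpace ℝ (Fin n)) 1 →
        (∀ x ∈ ball (0 : EuclideanSpace ℝ (Fin n)) 1,
          r₁ • x + c₁ ∈ ball (0 : EuclideanSpace ℝ (Fin n)) 1) →
        r₁ * R ((r₁, c₁), P) = r (r₁ • P + c₁)) := by
  rintro ⟨r, R, -, hr, -, hR, heq⟩
  have h0 : (0 : EuclideanSpace ℝ (Fin n)) ∈ ball 0 1 := mem_ball_self one_pos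
  have hbound : ∀ t ∈ Ioc (0 : ℝ) 1, r 0 ≤ t := by
    intro t ht
    have hmaps : ∀ x ∈ ball (0 : EuclideanSpace ℝ (Fin n)) 1, t • x + 0 ∈ ball 0 1 :=
      fun x hx => by
        simpa using (convex_ball 0 1).smul_mem_of_zero_mem h0 hx ⟨ht.1.le, ht.2⟩
    have hid : t * R ((t, 0), 0) = r 0 := by
      simpa using heq t 0 0 ht h0 h0 hmaps
    exact hid ▸ mul_le_of_le_one_right ht.1.le (hR ((t, 0), 0) ht h0 h0).2
  obtain ⟨hr0, hr1⟩ := hr 0 h0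
  linarith [hbound (r 0 / 2) ⟨by positivity, by linarith⟩]

/-- there is no pair of continuous functions `r : 𝔻 → (0,1]` and
`R : ((0,1] × 𝔻) × 𝔻 → (0,1]` with `r₁ * R((r₁,c₁),P) = r (r₁ • P + c₁)` whenever the
affine map `x ↦ r₁ • x + c₁` sends the open unit ball `𝔻 ⊆ ℝⁿ` into itself. -/
theorem stmt3 (n : ℕ) (hn : 1 ≤ n) :
    ¬ ∃ (r : EuclideanSpace ℝ (Fin n) → ℝ)
        (R : (ℝ × EuclideanSpace ℝ (Fin n)) × EuclideanSpace ℝ (Fin n) → ℝ),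
      ContinuousOn r (ball (0 : EuclideanSpace ℝ (Fin n)) 1) ∧
      (∀ P ∈ ball (0 : EuclideanSpace ℝ (Fin n)) 1, r P ∈ Ioc (0 : ℝ) 1) ∧
      ContinuousOn R {p : (ℝ × EuclideanSpace ℝ (Fin n)) × EuclideanSpace ℝ (Fin n) |
        p.1.1 ∈ Ioc (0 : ℝ) 1 ∧ p.1.2 ∈ ball (0 : EuclideanSpace ℝ (Fin n)) 1 ∧
        p.2 ∈ ball (0 : EuclideanSpace ℝ (Fin n)) 1} ∧
      (∀ p : (ℝ × EuclideanSpace ℝ (Fin n)) × EuclideanSpace ℝ (Fin n),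
        p.1.1 ∈ Ioc (0 : ℝ) 1 → p.1.2 ∈ ball (0 : EuclideanSpace ℝ (Fin n)) 1 →
        p.2 ∈ ball (0 : EuclideanSpace ℝ (Fin n)) 1 → R p ∈ Ioc (0 : ℝ) 1) ∧
      (∀ (r₁ : ℝ) (c₁ P : EuclideanSpace ℝ (Fin n)),
        r₁ ∈ Ioc (0 : ℝ) 1 → c₁ ∈ ball (0 : EuclideanSpace ℝ (Fin n)) 1 →
        P ∈ ball (0 : EuclideanSpace ℝ (Fin n)) 1 →
        (∀ x ∈ ball (0 : EuclideanSpace ℝ (Fin n)) 1,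
          r₁ • x + c₁ ∈ ball (0 : EuclideanSpace ℝ (Fin n)) 1) →
        r₁ * R ((r₁, c₁), P) = r (r₁ • P + c₁)) :=
  stmt3_general n
end

section
/- Let X be the space of pairs (a, P) where a : 𝔻 → 𝔻 is an affine embedding a(x) = r·x + c (r > 0, image contained in 𝔻) and P ∈ 𝔻 with P ∉ closure(a(𝔻)). Let Y = {(d,P) ∈ 𝔻 × 𝔻 : d ≠ P}. Then the map X → Y sending (a,P) to (c,P) (replacing the disk by its center) is a homotopy equivalence. -/
/-!
The image of the unit ball under `x ↦ r • x + c` is `ball c r`, so a point `(r, c, P)` of `X`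
is a center `c` and a point `P` together with a radius `r > 0` satisfying `ball c r ⊆ 𝔻` and
`r < dist P c`. Both conditions are inherited by smaller radii, so for fixed `(c, P)` the admissible
radii form an interval. Choosing the radius `min (dist c P) (1 - ‖c‖) / 2`, which depends
continuously on `(c, P)`, gives a section `Y → X` of the center map, and moving the radius linearly
inside that interval deforms the composite `X → Y → X` to the identity.
-/

open Metric Set

variable {E : Type*} [NormedAddCommGroup E]

theorem image_smul_add_unitBall [NormedSpace ℝ E] {r : ℝ} (hr : 0 < r) (c : E) :
    (fun x => r • x + c) '' ball (0 : E) 1 = ball c r := by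
  rw [← affinity_unitBall hr, ← image_smul, ← image_vadd, image_image]
  simp only [vadd_eq_add, add_comm c]

section Radius

def IsAdmissibleRadius (c P : E) (r : ℝ) : Prop :=
  0 < r ∧ ball c r ⊆ ball 0 1 ∧ r < dist P c

variable {c P : E}

theorem IsAdmissibleRadius.of_le {r s : ℝ} (hr : IsAdmissibleRadius c P r) (hs : 0 < s)
    (hsr : s ≤ r) : IsAdmissibleRadius c P s :=
  ⟨hs, (ball_subset_ball hsr).trans hr.2.1, hsr.trans_lt hr.2.2⟩

theorem convex_setOf_isAdmissibleRadius (c P : E) :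
    Convex ℝ {r | IsAdmissibleRadius c P r} :=
  convex_iff_ordConnected.2
    ⟨fun _ hr _ hs _ ⟨hrt, hts⟩ => hs.of_le (hr.1.trans_le hrt) hts⟩

theorem IsAdmissibleRadius.center_mem_ball {r : ℝ} (hr : IsAdmissibleRadius c P r) :
    c ∈ ball (0 : E) 1 :=
  hr.2.1 (mem_ball_self hr.1)

theorem IsAdmissibleRadius.center_ne {r : ℝ} (hr : IsAdmissibleRadius c P r) : c ≠ P := by
  rintro rfl
  exact (hr.1.trans hr.2.2).ne' (dist_self c)

theorem isAdmissibleRadius_iff [NormedSpace ℝ E] {r : ℝ} (hr : 0 < r) :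
    IsAdmissibleRadius c P r ↔
      (∀ x ∈ ball (0 : E) 1, r • x + c ∈ ball (0 : E) 1) ∧
        P ∉ closure ((fun x => r • x + c) '' ball (0 : E) 1) := by
  rw [image_smul_add_unitBall hr, closure_ball c hr.ne', mem_closedBall, not_le,
    IsAdmissibleRadius, ← image_smul_add_unitBall hr, image_subset_iff]
  exact and_iff_right hr

noncomputable def defaultRadius (c P : E) : ℝ :=
  min (dist c P) (1 - ‖c‖) / 2

@[fun_prop]
theorem Continuous.defaultRadius {X : Type*} [TopologicalSpace X] {f g : X → E}
    (hf : Continuous f) (hg : Continuous g) : Continuous fun x => defaultRadius (f x) (g x) := by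
  unfold _root_.defaultRadius
  fun_prop

theorem isAdmissibleRadius_defaultRadius (hc : c ∈ ball (0 : E) 1) (hcP : c ≠ P) :
    IsAdmissibleRadius c P (defaultRadius c P) := by
  have hc' : ‖c‖ < 1 := mem_ball_zero_iff.1 hc
  have hdist : 0 < dist c P := dist_pos.2 hcP
  have hmin_dist := min_le_left (dist c P) (1 - ‖c‖)
  have hmin_norm := min_le_right (dist c P) (1 - ‖c‖)
  refine ⟨half_pos (lt_min hdist (by linarith)), ball_subset_ball' ?_, ?_⟩
  · rw [dist_zero_right, defaultRadius]
    linarith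
  · rw [dist_comm, defaultRadius]
    linarith

end Radius

section Configurations

variable [NormedSpace ℝ E]

/-- `((r, c), P)` encodes the affine embedding `x ↦ r • x + c` of the unit ball together with
the point `P`. -/
def IsDiskPointConfig (q : (ℝ × E) × E) : Prop :=
  0 < q.1.1 ∧ (∀ x ∈ ball (0 : E) 1, q.1.1 • x + q.1.2 ∈ ball (0 : E) 1) ∧
    q.2 ∈ ball (0 : E) 1 ∧ q.2 ∉ closure ((fun x => q.1.1 • x + q.1.2) '' ball (0 : E) 1)

theorem isDiskPointConfig_iff {r : ℝ} {c P : E} :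
    IsDiskPointConfig ((r, c), P) ↔ IsAdmissibleRadius c P r ∧ P ∈ ball (0 : E) 1 := by
  constructor
  · rintro ⟨hr, hmaps, hP, hclosure⟩
    exact ⟨(isAdmissibleRadius_iff hr).2 ⟨hmaps, hclosure⟩, hP⟩
  · rintro ⟨hadm, hP⟩
    obtain ⟨hmaps, hclosure⟩ := (isAdmissibleRadius_iff hadm.1).1 hadm
    exact ⟨hadm.1, hmaps, hP, hclosure⟩

variable (E) in
abbrev DiskPointConfig : Type _ := {q : (ℝ × E) × E // IsDiskPointConfig q}

variable (E) in
abbrev CenterPointConfig : Type _ :=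
  {y : E × E // y.1 ∈ ball (0 : E) 1 ∧ y.2 ∈ ball (0 : E) 1 ∧ y.1 ≠ y.2}

theorem DiskPointConfig.isAdmissibleRadius (q : DiskPointConfig E) :
    IsAdmissibleRadius q.1.1.2 q.1.2 q.1.1.1 :=
  (isDiskPointConfig_iff.1 q.2).1

def centerMap : C(DiskPointConfig E, CenterPointConfig E) where
  toFun q := ⟨(q.1.1.2, q.1.2), q.isAdmissibleRadius.center_mem_ball, q.2.2.2.1,
    q.isAdmissibleRadius.center_ne⟩

noncomputable def defaultDiskMap : C(CenterPointConfig E, DiskPointConfig E) where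
  toFun y := ⟨((defaultRadius y.1.1 y.1.2, y.1.1), y.1.2),
    isDiskPointConfig_iff.2 ⟨isAdmissibleRadius_defaultRadius y.2.1 y.2.2.2, y.2.2.1⟩⟩
  continuous_toFun := Continuous.subtype_mk (by fun_prop) _

noncomputable def radiusHomotopy :
    (defaultDiskMap.comp centerMap).Homotopy (ContinuousMap.id (DiskPointConfig E)) where
  toFun p :=
    let r := p.2.1.1.1
    let c := p.2.1.1.2
    let P := p.2.1.2
    ⟨(((1 - p.1) * defaultRadius c P + p.1 * r, c), P), isDiskPointConfig_iff.2
      ⟨convex_setOf_isAdmissibleRadius c P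
        (isAdmissibleRadius_defaultRadius p.2.isAdmissibleRadius.center_mem_ball
          p.2.isAdmissibleRadius.center_ne)
        p.2.isAdmissibleRadius (unitInterval.one_minus_nonneg p.1) (unitInterval.nonneg p.1)
        (sub_add_cancel 1 _), p.2.2.2.2.1⟩⟩
  continuous_toFun := Continuous.subtype_mk (by fun_prop) _
  map_zero_left q := by ext <;> simp [defaultDiskMap, centerMap]
  map_one_left q := by ext <;> simp

noncomputable def diskCenterHomotopyEquiv :
    ContinuousMap.HomotopyEquiv (DiskPointConfig E) (CenterPointConfig E) where
  toFun := centerMap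
  invFun := defaultDiskMap
  left_inv := ⟨radiusHomotopy⟩
  right_inv := .refl _

end Configurations

theorem stmt8_general (n : ℕ) :
    ∃ e : ContinuousMap.HomotopyEquiv
        {q : (ℝ × EuclideanSpace ℝ (Fin n)) × EuclideanSpace ℝ (Fin n) // 0 < q.1.1 ∧
          (∀ x ∈ ball (0 : EuclideanSpace ℝ (Fin n)) 1,
            q.1.1 • x + q.1.2 ∈ ball (0 : EuclideanSpace ℝ (Fin n)) 1) ∧
          q.2 ∈ ball (0 : EuclideanSpace ℝ (Fin n)) 1 ∧
          q.2 ∉ closure ((fun x => q.1.1 • x + q.1.2) '' ball (0 : EuclideanSpace ℝ (Fin n)) 1)}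
        {y : EuclideanSpace ℝ (Fin n) × EuclideanSpace ℝ (Fin n) //
          y.1 ∈ ball (0 : EuclideanSpace ℝ (Fin n)) 1 ∧
          y.2 ∈ ball (0 : EuclideanSpace ℝ (Fin n)) 1 ∧ y.1 ≠ y.2},
      ∀ x, (e.toFun x).1 = (x.1.1.2, x.1.2) :=
  ⟨diskCenterHomotopyEquiv, fun _ => rfl⟩

/-- let `X` be the space of pairs `(a, P)` where `a(x) = r • x + c` is an
affine self-embedding of the open unit ball `𝔻 ⊆ ℝⁿ` and `P ∈ 𝔻` avoids the closure of
the image of `a`, and let `Y = {(d, P) ∈ 𝔻 × 𝔻 : d ≠ P}`. The map `(a, P) ↦ (c, P)`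
(replace the disk by its center) is a homotopy equivalence. -/
theorem stmt8 (n : ℕ) (hn : 1 ≤ n) :
    ∃ e : ContinuousMap.HomotopyEquiv
        {q : (ℝ × EuclideanSpace ℝ (Fin n)) × EuclideanSpace ℝ (Fin n) // 0 < q.1.1 ∧
          (∀ x ∈ ball (0 : EuclideanSpace ℝ (Fin n)) 1,
            q.1.1 • x + q.1.2 ∈ ball (0 : EuclideanSpace ℝ (Fin n)) 1) ∧
          q.2 ∈ ball (0 : EuclideanSpace ℝ (Fin n)) 1 ∧
          q.2 ∉ closure ((fun x => q.1.1 • x + q.1.2) '' ball (0 : EuclideanSpace ℝ (Fin n)) 1)}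
        {y : EuclideanSpace ℝ (Fin n) × EuclideanSpace ℝ (Fin n) //
          y.1 ∈ ball (0 : EuclideanSpace ℝ (Fin n)) 1 ∧
          y.2 ∈ ball (0 : EuclideanSpace ℝ (Fin n)) 1 ∧ y.1 ≠ y.2},
      ∀ x, (e.toFun x).1 = (x.1.1.2, x.1.2) :=
  stmt8_general n
end

section
/- Let X_0 = {*}, X_1 = 𝔻, X_2 = {(a,P) : a an affine self-embedding of 𝔻, P ∈ 𝔻}, with face maps d_0[P] = *, d_1[P] = *, and d_0[a,P] = [P], d_1[a,P] = [a(P)], d_2[a,P] = [a(0)]. Suppose s_0 : X_0 → X_1 and s_1 : X_1 → X_2 are continuous maps satisfying the simplicial identities d_0 s_1 = s_0 d_0, d_1 s_1 = id, d_2 s_1 = id. Then s_0(*) = 0 and there exists a continuous function r : 𝔻 → (0,1] such that s_1[P] = [x ↦ r(P)·x + P, 0] for all P ∈ 𝔻. -/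
/-!
The affine map `x ↦ r • x + c` sends the unit ball onto `ball c r`, so comparing diameters gives
`r ≤ 1`. Evaluating the simplicial identities at `P = A` gives `r • A + A = A`, hence `A = 0`.
-/

open Metric Set

lemma le_of_ball_subset_ball {E : Type*} [NormedAddCommGroup E] [NormedSpace ℝ E] [Nontrivial E]
    {a b : E} {r s : ℝ} (hr : 0 ≤ r) (hs : 0 ≤ s) (h : ball a r ⊆ ball b s) : r ≤ s := by
  have hdiam := diam_mono h isBounded_ball
  rw [diam_ball_eq a hr, diam_ball_eq b hs] at hdiam
  linarith

lemma le_one_of_smul_add_mem_unitBall {E : Type*} [NormedAddCommGroup E] [NormedSpace ℝ E]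
    [Nontrivial E] {r : ℝ} (hr : 0 < r) {c : E}
    (h : ∀ x ∈ ball (0 : E) 1, r • x + c ∈ ball (0 : E) 1) : r ≤ 1 := by
  refine le_of_ball_subset_ball (a := c) (b := 0) hr.le zero_le_one ?_
  rw [← affinity_unitBall hr c]
  rintro _ ⟨_, ⟨x, hx, rfl⟩, rfl⟩
  simpa [add_comm] using h x hx

/-- with `X_0 = {*}`, `X_1 = 𝔻`, `X_2` the space of pairs `(a, P)` of an
affine self-embedding `a(x) = r • x + c` of `𝔻` and `P ∈ 𝔻` (encoded as `((r, c), P)`),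
faces `d_0[a,P] = [P]`, `d_1[a,P] = [a(P)]`, `d_2[a,P] = [a(0)] = [c]`: if `s_0` picks out
`A ∈ 𝔻` and `s_1` is continuous with `d_0 s_1 = s_0 d_0`, `d_1 s_1 = id`, `d_2 s_1 = id`,
then `A = 0` and `s_1[P] = [x ↦ r(P) • x + P, 0]` for a continuous `r : 𝔻 → (0,1]`. -/
theorem stmt11 (n : ℕ) (hn : 1 ≤ n)
    (A : EuclideanSpace ℝ (Fin n)) (hA : A ∈ ball (0 : EuclideanSpace ℝ (Fin n)) 1)
    (s₁ : EuclideanSpace ℝ (Fin n) → (ℝ × EuclideanSpace ℝ (Fin n)) × EuclideanSpace ℝ (Fin n))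
    (hcont : ContinuousOn s₁ (ball (0 : EuclideanSpace ℝ (Fin n)) 1))
    (hvalid : ∀ P ∈ ball (0 : EuclideanSpace ℝ (Fin n)) 1,
      0 < (s₁ P).1.1 ∧
      (∀ x ∈ ball (0 : EuclideanSpace ℝ (Fin n)) 1,
        (s₁ P).1.1 • x + (s₁ P).1.2 ∈ ball (0 : EuclideanSpace ℝ (Fin n)) 1) ∧
      (s₁ P).2 ∈ ball (0 : EuclideanSpace ℝ (Fin n)) 1)
    -- `d_0 s_1 = s_0 d_0` : the point entry of `s₁ P` is `A`
    (hd0 : ∀ P ∈ ball (0 : EuclideanSpace ℝ (Fin n)) 1, (s₁ P).2 = A)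
    -- `d_1 s_1 = id` : `a(Q) = P`
    (hd1 : ∀ P ∈ ball (0 : EuclideanSpace ℝ (Fin n)) 1,
      (s₁ P).1.1 • (s₁ P).2 + (s₁ P).1.2 = P)
    -- `d_2 s_1 = id` : `a(0) = c = P`
    (hd2 : ∀ P ∈ ball (0 : EuclideanSpace ℝ (Fin n)) 1, (s₁ P).1.2 = P) :
    A = 0 ∧ ∃ r : EuclideanSpace ℝ (Fin n) → ℝ,
      ContinuousOn r (ball (0 : EuclideanSpace ℝ (Fin n)) 1) ∧
      ∀ P ∈ ball (0 : EuclideanSpace ℝ (Fin n)) 1,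
        r P ∈ Ioc (0 : ℝ) 1 ∧ s₁ P = ((r P, P), 0) := by
  have hA0 : A = 0 := by
    have h := hd1 A hA
    rw [hd0 A hA, hd2 A hA, add_eq_right, smul_eq_zero] at h
    exact h.resolve_left (hvalid A hA).1.ne'
  have : Nonempty (Fin n) := ⟨⟨0, hn⟩⟩
  refine ⟨hA0, fun P ↦ (s₁ P).1.1, hcont.fst.fst, fun P hP ↦ ⟨?_, ?_⟩⟩
  · obtain ⟨hr, hmaps, -⟩ := hvalid P hP
    exact ⟨hr, le_one_of_smul_add_mem_unitBall hr hmaps⟩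
  · exact Prod.ext (Prod.ext rfl (hd2 P hP)) (hA0 ▸ hd0 P hP)
end

section
/- The semi-simplicial space X with X_0 = {*}, X_k the space of lists [a₁,…,a_{k−1},P] of affine self-embeddings of the open unit ball 𝔻 ⊂ ℝⁿ followed by a point P ∈ 𝔻, with the face maps d_0 = drop first, d_i = compose i-th and (i+1)-st embedding, d_{k−1} = evaluate last embedding at P, d_k = evaluate last embedding at 0, admits no system of continuous degeneracy maps s_i : X_i → X_{i+1} making it a simplicial space (i.e. satisfying all simplicial identities involving the given faces). -/
/-
The identities `d₀ s₂ = s₁ d₀`, `d₁ s₂ = s₁ d₁` and `d₂ s₂ = id` say that for a valid `(a; P) ∈ X₂`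
the two maps of `s₂ (a; P)` are `a` and the map `c_P` of `s₁ P`, and that `a ∘ c_P = c_{a(P)}`.
Comparing ratios gives `r_a · r(P) = r(a(P))`. At a fixed point `P` of a map `a` with `r_a ≠ 1`
(the homothety of ratio `1/2` about `0`) this forces `r(P) = 0`, whereas `s₁ P` is valid.
-/

open Metric

/-- `Sp n k` models the space `X_k`: for `k ≥ 1` a list of `k - 1` affine maps
`x ↦ r • x + c` (encoded as pairs `(r, c)`) together with a point `P`; `X_0` is a point. -/
def Sp (n : ℕ) : ℕ → Type
  | 0 => PUnit
  | k + 1 => (Fin k → ℝ × EuclideanSpace ℝ (Fin n)) × EuclideanSpace ℝ (Fin n)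

noncomputable instance (n k : ℕ) : TopologicalSpace (Sp n k) :=
  match k with
  | 0 => (inferInstance : TopologicalSpace PUnit)
  | k + 1 => (inferInstance : TopologicalSpace
      ((Fin k → ℝ × EuclideanSpace ℝ (Fin n)) × EuclideanSpace ℝ (Fin n)))

/-- Evaluation of the affine map encoded by `(r, c)`. -/
noncomputable def aff (n : ℕ) (a : ℝ × EuclideanSpace ℝ (Fin n))
    (x : EuclideanSpace ℝ (Fin n)) : EuclideanSpace ℝ (Fin n) := a.1 • x + a.2

/-- Composition of affine maps: `(r x + c) ∘ (r' x + c') = r r' x + (r c' + c)`. -/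
noncomputable def affComp (n : ℕ) (a b : ℝ × EuclideanSpace ℝ (Fin n)) :
    ℝ × EuclideanSpace ℝ (Fin n) := (a.1 * b.1, a.1 • b.2 + a.2)

/-- The face maps `d_i : X_{k+1} → X_k`: `d_0` drops the first map, `d_i` (for
`1 ≤ i ≤ k - 1`) composes the `i`-th and `(i+1)`-st maps, `d_k` evaluates the last map
at `P`, and `d_{k+1}` evaluates the last map at `0`. -/
noncomputable def face (n : ℕ) : ∀ {k : ℕ}, ℕ → Sp n (k + 1) → Sp n k
  | 0, _, _ => PUnit.unit
  | k + 1, i, x =>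
    if i = 0 then (fun j => x.1 j.succ, x.2)
    else if i ≤ k then
      (fun j => if (j : ℕ) + 1 < i then x.1 (Fin.castSucc j)
        else if (j : ℕ) + 1 = i then affComp n (x.1 (Fin.castSucc j)) (x.1 j.succ)
        else x.1 j.succ, x.2)
    else if i = k + 1 then (fun j => x.1 (Fin.castSucc j), aff n (x.1 (Fin.last k)) x.2)
    else (fun j => x.1 (Fin.castSucc j), aff n (x.1 (Fin.last k)) 0)

/-- Validity: each affine map has positive ratio and sends the open unit ball `𝔻` into
itself, and the point lies in `𝔻`. -/
def Valid (n : ℕ) : ∀ {k : ℕ}, Sp n k → Prop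
  | 0, _ => True
  | _ + 1, x => (∀ j, 0 < (x.1 j).1 ∧
      ∀ y ∈ ball (0 : EuclideanSpace ℝ (Fin n)) 1,
        aff n (x.1 j) y ∈ ball (0 : EuclideanSpace ℝ (Fin n)) 1) ∧
    x.2 ∈ ball (0 : EuclideanSpace ℝ (Fin n)) 1

namespace Sp

variable {n : ℕ}

theorem face_zero {k : ℕ} (x : Sp n (k + 2)) :
    face n 0 x = ((fun j => x.1 j.succ, x.2) : Sp n (k + 1)) :=
  rfl

theorem face_succ_apply {k : ℕ} (x : Sp n (k + 2)) (j : Fin k) :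
    (face n (j + 1) x).1 j = affComp n (x.1 j.castSucc) (x.1 j.succ) := by
  simp [face, Nat.succ_le_of_lt j.isLt]

theorem face_last {k : ℕ} (x : Sp n (k + 2)) :
    face n (k + 1) x =
      ((fun j => x.1 j.castSucc, aff n (x.1 (Fin.last k)) x.2) : Sp n (k + 1)) := by
  simp only [face, Nat.add_one_ne_zero, Nat.not_succ_le_self, ↓reduceIte]
  rfl

end Sp

theorem aff_homothety_mem_ball {n : ℕ} {r : ℝ} (hr₀ : 0 ≤ r) (hr₁ : r ≤ 1)
    {y : EuclideanSpace ℝ (Fin n)} (hy : y ∈ ball 0 1) : aff n (r, 0) y ∈ ball 0 1 := by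
  rw [mem_ball_zero_iff] at hy ⊢
  calc ‖aff n (r, 0) y‖ = r * ‖y‖ := by simp [aff, norm_smul, abs_of_nonneg hr₀]
    _ < 1 := by nlinarith [norm_nonneg y]

section Degeneracy

variable {n : ℕ} {s : ∀ k : ℕ, Sp n k → Sp n (k + 1)}

theorem affComp_map_degeneracy_face_zero
    (hcomm : ∀ k (x : Sp n (k + 1)), Valid n x → ∀ i : ℕ, i < k + 1 →
      face n i (s (k + 1) x) = s k (face n i x))
    (hid : ∀ k (x : Sp n k), Valid n x → face n k (s k x) = x)
    {x : Sp n 2} (hx : Valid n x) :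
    affComp n (x.1 0) ((s 1 (face n 0 x)).1 0) = (s 1 (face n 1 x)).1 0 := by
  have hd₀ : (s 2 x).1 1 = (s 1 (face n 0 x)).1 0 :=
    congrFun (congrArg Prod.fst (hcomm 1 x hx 0 two_pos)) 0
  have hd₁ : affComp n ((s 2 x).1 0) ((s 2 x).1 1) = (s 1 (face n 1 x)).1 0 :=
    (Sp.face_succ_apply (s 2 x) 0).symm.trans
      (congrFun (congrArg Prod.fst (hcomm 1 x hx 1 one_lt_two)) 0)
  have hd₂ : (s 2 x).1 0 = x.1 0 :=
    congrFun (congrArg Prod.fst ((Sp.face_last (s 2 x)).symm.trans (hid 2 x hx))) 0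
  rw [← hd₀, ← hd₂, hd₁]

end Degeneracy

theorem stmt13_general (n : ℕ) :
    ¬ ∃ s : ∀ k : ℕ, Sp n k → Sp n (k + 1),
      (∀ k, ContinuousOn (s k) {x : Sp n k | Valid n x}) ∧
      (∀ k (x : Sp n k), Valid n x → Valid n (s k x)) ∧
      (∀ k (x : Sp n (k + 1)), Valid n x → ∀ i : ℕ, i < k + 1 →
        face n i (s (k + 1) x) = s k (face n i x)) ∧
      (∀ k (x : Sp n k), Valid n x →
        face n k (s k x) = x ∧ face n (k + 1) (s k x) = x) := by
  rintro ⟨s, -, hval, hcomm, hid⟩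
  let x : Sp n 2 := ((fun _ => ((1 / 2 : ℝ), 0), 0) :
    (Fin 1 → ℝ × EuclideanSpace ℝ (Fin n)) × EuclideanSpace ℝ (Fin n))
  have hx : Valid n x := ⟨fun _ => ⟨by norm_num, fun _ hy =>
    aff_homothety_mem_ball (by norm_num) (by norm_num) hy⟩, mem_ball_self one_pos⟩
  have hfix : face n 1 x = face n 0 x := by
    rw [Sp.face_last, Sp.face_zero]
    exact Prod.ext (funext fun j => j.elim0) (by simp [x, aff])
  have hratio := congrArg Prod.fst
    (affComp_map_degeneracy_face_zero hcomm (fun k y hy => (hid k y hy).1) hx)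
  rw [hfix] at hratio
  have hpos := ((hval 1 (face n 0 x) ⟨fun j => j.elim0, mem_ball_self one_pos⟩).1 0).1
  simp only [affComp, x] at hratio
  linarith

/-- the semi-simplicial space `X` of configurations of affine
self-embeddings of the unit ball followed by a point admits no system of continuous
degeneracy maps `s_k : X_k → X_{k+1}` satisfying the simplicial identities
`d_i s_k = s_{k-1} d_i` (`i < k`) and `d_k s_k = id = d_{k+1} s_k`. -/
theorem stmt13 (n : ℕ) (hn : 1 ≤ n) :
    ¬ ∃ s : ∀ k : ℕ, Sp n k → Sp n (k + 1),
      (∀ k, ContinuousOn (s k) {x : Sp n k | Valid n x}) ∧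
      (∀ k (x : Sp n k), Valid n x → Valid n (s k x)) ∧
      (∀ k (x : Sp n (k + 1)), Valid n x → ∀ i : ℕ, i < k + 1 →
        face n i (s (k + 1) x) = s k (face n i x)) ∧
      (∀ k (x : Sp n k), Valid n x →
        face n k (s k x) = x ∧ face n (k + 1) (s k x) = x) :=
  stmt13_general n
end
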